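/- Let q and q′ be nonzero complex numbers. If the quantum planes A_q and A_{q′} are isomorphic as ℂ-algebras, then q′ = q or q′ = q^{-1}. Conversely, if q′ = q or q′ = q^{-1}, then A_q and A_{q′} are isomorphic as ℂ-algebras. -/

import Mathlib

/-!
The swap `x ↦ y, y ↦ x` identifies `A_q` with `A_{q⁻¹}`. Conversely, let `q ≠ 1` and let `X, Y`
generate `A_{q'}` with `XY = qYX`. Grade `A_{q'}` by total degree: constant terms are scalars, say
`α, β` for `X, Y`, and since `X, Y` generate, their linear terms `u, v` span the degree-one part.
The degree-one part of `XY = qYX` reads `(1 - q)(αv + βu) = 0`, which forces `α = β = 0`; the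
degree-two part then reads `uv = q vu`. Writing `u, v` in the basis `x, y`, using `xy = q'yx` and
comparing the coefficients of `x², yx, y²` gives `q' = q` or `qq' = 1`. The case `q = 1` follows
by applying this to the inverse isomorphism.
-/

open FreeAlgebra

/-- The free associative ℂ-algebra on two generators. -/
abbrev FreeTwo : Type := FreeAlgebra ℂ (Fin 2)

/-- The defining relation of the quantum plane with parameter `q`:
`x * y = q • (y * x)`. -/
def quantumRel (q : ℂ) : FreeTwo → FreeTwo → Prop :=
  fun a b => a = ι ℂ 0 * ι ℂ 1 ∧ b = q • (ι ℂ 1 * ι ℂ 0)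

/-- The quantum plane `ℂ⟨x,y⟩/(xy - q·yx)`. -/
abbrev QuantumPlane (q : ℂ) : Type := RingQuot (quantumRel q)

/-- The hypotheses are the coefficients of `x², yx, y²` in
`(ax + by)(cx + dy) = q (cx + dy)(ax + by)` inside `A_{q'}`. -/
theorem eq_or_mul_eq_one_of_commutation {K : Type*} [Field K] {q q' a b c d : K} (hq : q ≠ 1)
    (hdet : a * d - b * c ≠ 0) (hxx : a * c = q * (c * a))
    (hyx : a * d * q' + b * c = q * (c * b * q' + d * a)) (hyy : b * d = q * (d * b)) :
    q' = q ∨ q * q' = 1 := by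
  have hq' : 1 - q ≠ 0 := sub_ne_zero.2 hq.symm
  have hac : a * c = 0 :=
    (mul_eq_zero.1 (by linear_combination hxx : (1 - q) * (a * c) = 0)).resolve_left hq'
  have hbd : b * d = 0 :=
    (mul_eq_zero.1 (by linear_combination hyy : (1 - q) * (b * d) = 0)).resolve_left hq'
  have hmid : a * d * (q' - q) + b * c * (1 - q * q') = 0 := by linear_combination hyx
  rcases mul_eq_zero.1 (by linear_combination b * d * hac : a * d * (b * c) = 0) with had | hbc
  · have hbc : b * c ≠ 0 := fun hbc => hdet (by rw [had, hbc, sub_zero])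
    right
    linear_combination -(mul_eq_zero.1
      (by linear_combination hmid - (q' - q) * had : b * c * (1 - q * q') = 0)).resolve_left hbc
  · have had : a * d ≠ 0 := fun had => hdet (by rw [had, hbc, sub_zero])
    left
    linear_combination (mul_eq_zero.1
      (by linear_combination hmid - (1 - q * q') * hbc : a * d * (q' - q) = 0)).resolve_left had

namespace QuantumPlane

section Generators

variable (q : ℂ)

noncomputable def x : QuantumPlane q := RingQuot.mkAlgHom ℂ (quantumRel q) (ι ℂ 0)

noncomputable def y : QuantumPlane q := RingQuot.mkAlgHom ℂ (quantumRel q) (ι ℂ 1)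

theorem x_mul_y : x q * y q = q • (y q * x q) := by
  simpa [x, y] using RingQuot.mkAlgHom_rel ℂ (s := quantumRel q) ⟨rfl, rfl⟩

theorem adjoin_x_y : Algebra.adjoin ℂ {x q, y q} = ⊤ := by
  have himage : RingQuot.mkAlgHom ℂ (quantumRel q) '' Set.range (ι ℂ) = {x q, y q} := by
    ext z
    simp [x, y, Fin.exists_fin_two, eq_comm]
  rw [← himage, ← AlgHom.map_adjoin, FreeAlgebra.adjoin_range_ι, Algebra.map_top,
    AlgHom.range_eq_top]
  exact RingQuot.mkAlgHom_surjective ℂ _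

variable {q} {B : Type*} [Semiring B] [Algebra ℂ B]

noncomputable def lift (u v : B) (h : u * v = q • (v * u)) : QuantumPlane q →ₐ[ℂ] B :=
  RingQuot.liftAlgHom ℂ ⟨FreeAlgebra.lift ℂ ![u, v], by rintro _ _ ⟨rfl, rfl⟩; simp [h]⟩

@[simp]
theorem lift_x (u v : B) (h : u * v = q • (v * u)) : lift u v h (x q) = u := by
  simp [lift, x]

@[simp]
theorem lift_y (u v : B) (h : u * v = q • (v * u)) : lift u v h (y q) = v := by
  simp [lift, y]

theorem algHom_ext {f g : QuantumPlane q →ₐ[ℂ] B} (hx : f (x q) = g (x q))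
    (hy : f (y q) = g (y q)) : f = g :=
  RingQuot.ringQuot_ext' ℂ f g <| FreeAlgebra.hom_ext <| funext <| Fin.forall_fin_two.2 ⟨hx, hy⟩

end Generators

noncomputable def swap {q q' : ℂ} (h : q * q' = 1) : QuantumPlane q →ₐ[ℂ] QuantumPlane q' :=
  lift (y q') (x q') (by rw [x_mul_y, smul_smul, h, one_smul])

noncomputable def swapEquiv {q q' : ℂ} (h : q * q' = 1) :
    QuantumPlane q ≃ₐ[ℂ] QuantumPlane q' :=
  AlgEquiv.ofAlgHom (swap h) (swap (by rwa [mul_comm]))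
    (algHom_ext (by simp [swap]) (by simp [swap])) (algHom_ext (by simp [swap]) (by simp [swap]))

section LinearIndependence

variable (q : ℂ)

open MvPolynomial in
/-- Applied to `1`, this sends the ordered monomial `yʲ xⁱ` to `X₁ʲ X₀ⁱ`. -/
noncomputable def mvPolynomialRep : QuantumPlane q →ₐ[ℂ] Module.End ℂ (MvPolynomial (Fin 2) ℂ) :=
  lift (LinearMap.mulLeft ℂ (X 0) ∘ₗ (aeval ![X 0, q • X 1]).toLinearMap)
    (LinearMap.mulLeft ℂ (X 1)) <| LinearMap.ext fun p => by simp [mul_left_comm]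

theorem linearIndependent_x_y : LinearIndependent ℂ ![x q, y q] := by
  refine LinearIndependent.pair_iff.2 fun s t h => ?_
  have e (v : Fin 2 → ℂ) := congrArg (fun w => MvPolynomial.eval v (mvPolynomialRep q w 1)) h
  simpa [mvPolynomialRep] using And.intro (e ![1, 0]) (e ![0, 1])

theorem linearIndependent_quadratic_monomials :
    LinearIndependent ℂ ![x q * x q, y q * x q, y q * y q] := by
  refine Fintype.linearIndependent_iff.2 fun g h => ?_
  have e (v : Fin 2 → ℂ) := congrArg (fun w => MvPolynomial.eval v (mvPolynomialRep q w 1)) h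
  have h₁ := e ![1, 0]
  have h₂ := e ![0, 1]
  have h₃ := e ![1, 1]
  simp [mvPolynomialRep, Fin.sum_univ_three] at h₁ h₂ h₃
  intro i
  fin_cases i
  · exact h₁
  · exact (by linear_combination h₃ - h₁ - h₂ : g 1 = 0)
  · exact h₂

end LinearIndependence

section Grading

open Polynomial Finset

variable {q : ℂ}

variable (q) in
noncomputable def grading : QuantumPlane q →ₐ[ℂ] (QuantumPlane q)[X] :=
  lift (C (x q) * X) (C (y q) * X) <| by
    have hX (a b : QuantumPlane q) : C a * X * (C b * X) = C (a * b) * X ^ 2 := by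
      rw [C_mul, pow_two, mul_assoc, ← mul_assoc X, X_mul_C, mul_assoc, mul_assoc]
    rw [hX, hX, x_mul_y, ← smul_C, smul_mul_assoc]

variable (q) in
noncomputable def homogeneousComponent (k : ℕ) : QuantumPlane q →ₗ[ℂ] QuantumPlane q :=
  (lcoeff (QuantumPlane q) k).restrictScalars ℂ ∘ₗ (grading q).toLinearMap

theorem homogeneousComponent_mul (k : ℕ) (w w' : QuantumPlane q) :
    homogeneousComponent q k (w * w') =
      ∑ p ∈ antidiagonal k, homogeneousComponent q p.1 w * homogeneousComponent q p.2 w' := by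
  simp [homogeneousComponent, coeff_mul]

@[simp]
theorem homogeneousComponent_algebraMap (k : ℕ) (s : ℂ) :
    homogeneousComponent q k (algebraMap ℂ _ s) = if k = 0 then algebraMap ℂ _ s else 0 := by
  simp [homogeneousComponent, coeff_C]

@[simp]
theorem homogeneousComponent_x (k : ℕ) :
    homogeneousComponent q k (x q) = if k = 1 then x q else 0 := by
  simp [homogeneousComponent, grading, coeff_X, eq_comm]

@[simp]
theorem homogeneousComponent_y (k : ℕ) :
    homogeneousComponent q k (y q) = if k = 1 then y q else 0 := by
  simp [homogeneousComponent, grading, coeff_X, eq_comm]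

theorem homogeneousComponent_zero_mul (w w' : QuantumPlane q) :
    homogeneousComponent q 0 (w * w') =
      homogeneousComponent q 0 w * homogeneousComponent q 0 w' := by
  simp [homogeneousComponent_mul]

theorem homogeneousComponent_one_mul {w w' : QuantumPlane q} {s s' : ℂ}
    (hw : homogeneousComponent q 0 w = algebraMap ℂ _ s)
    (hw' : homogeneousComponent q 0 w' = algebraMap ℂ _ s') :
    homogeneousComponent q 1 (w * w') =
      s • homogeneousComponent q 1 w' + s' • homogeneousComponent q 1 w := by
  simp [homogeneousComponent_mul, Nat.sum_antidiagonal_succ, hw, hw', Algebra.smul_def,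
    Algebra.commutes, add_comm]

theorem homogeneousComponent_two_mul {w w' : QuantumPlane q}
    (hw : homogeneousComponent q 0 w = 0) (hw' : homogeneousComponent q 0 w' = 0) :
    homogeneousComponent q 2 (w * w') =
      homogeneousComponent q 1 w * homogeneousComponent q 1 w' := by
  simp [homogeneousComponent_mul, Nat.sum_antidiagonal_succ, hw, hw']

variable (q) in
def firstOrderSubalgebra (W : Submodule ℂ (QuantumPlane q)) : Subalgebra ℂ (QuantumPlane q) where
  carrier := {w | homogeneousComponent q 0 w ∈ (⊥ : Subalgebra ℂ (QuantumPlane q)) ∧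
    homogeneousComponent q 1 w ∈ W}
  mul_mem' := by
    rintro w w' ⟨⟨s, hs⟩, hw⟩ ⟨⟨s', hs'⟩, hw'⟩
    refine ⟨?_, ?_⟩
    · rw [homogeneousComponent_zero_mul, ← hs, ← hs']
      exact Subalgebra.mul_mem _ (Subalgebra.algebraMap_mem _ s) (Subalgebra.algebraMap_mem _ s')
    · rw [homogeneousComponent_one_mul hs.symm hs'.symm]
      exact W.add_mem (W.smul_mem s hw') (W.smul_mem s' hw)
  add_mem' := by
    rintro w w' ⟨hw₀, hw₁⟩ ⟨hw'₀, hw'₁⟩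
    exact ⟨by simpa using add_mem hw₀ hw'₀, by simpa using add_mem hw₁ hw'₁⟩
  algebraMap_mem' s := by simp

theorem firstOrderSubalgebra_span_x_y_eq_top :
    firstOrderSubalgebra q (Submodule.span ℂ {x q, y q}) = ⊤ :=
  top_unique <| adjoin_x_y q ▸ Algebra.adjoin_le <| by
    simp [Set.insert_subset_iff, firstOrderSubalgebra, Submodule.mem_span_of_mem]

end Grading

variable {q q' : ℂ}

theorem smul_x_add_smul_y_mul (a b c d : ℂ) :
    (a • x q + b • y q) * (c • x q + d • y q) =
      (a * c) • (x q * x q) + (a * d * q + b * c) • (y q * x q) + (b * d) • (y q * y q) := by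
  simp only [add_mul, mul_add, smul_mul_smul, x_mul_y]
  module

theorem det_ne_zero_of_mem_span {a b c d : ℂ}
    (hx : x q ∈ Submodule.span ℂ {a • x q + b • y q, c • x q + d • y q})
    (hy : y q ∈ Submodule.span ℂ {a • x q + b • y q, c • x q + d • y q}) :
    a * d - b * c ≠ 0 := by
  obtain ⟨s, t, hst⟩ := Submodule.mem_span_pair.1 hx
  obtain ⟨s', t', hst'⟩ := Submodule.mem_span_pair.1 hy
  have hind := linearIndependent_x_y q
  obtain ⟨h₁, -⟩ := hind.eq_of_pair (s := s * a + t * c) (t := s * b + t * d) (s' := 1) (t' := 0)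
    (by linear_combination (norm := module) hst)
  obtain ⟨h₃, h₄⟩ := hind.eq_of_pair (s := s' * a + t' * c) (t := s' * b + t' * d) (s' := 0)
    (t' := 1) (by linear_combination (norm := module) hst')
  intro hdet
  have : (a * d - b * c) * (s * t' - t * s') = 1 := by
    linear_combination (s * a + t * c) * h₄ - (s * b + t * d) * h₃ + h₁
  simp [hdet] at this

theorem det_ne_zero_of_adjoin_eq_top {X Y : QuantumPlane q}
    (hadj : Algebra.adjoin ℂ {X, Y} = ⊤) {α β a b c d : ℂ}
    (hα : homogeneousComponent q 0 X = algebraMap ℂ _ α)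
    (hβ : homogeneousComponent q 0 Y = algebraMap ℂ _ β)
    (hab : homogeneousComponent q 1 X = a • x q + b • y q)
    (hcd : homogeneousComponent q 1 Y = c • x q + d • y q) : a * d - b * c ≠ 0 := by
  have hspan : firstOrderSubalgebra q
      (Submodule.span ℂ {homogeneousComponent q 1 X, homogeneousComponent q 1 Y}) = ⊤ :=
    top_unique <| hadj ▸ Algebra.adjoin_le <| Set.insert_subset_iff.2
      ⟨⟨⟨α, hα.symm⟩, Submodule.mem_span_of_mem (by simp)⟩,
        Set.singleton_subset_iff.2 ⟨⟨β, hβ.symm⟩, Submodule.mem_span_of_mem (by simp)⟩⟩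
  have hx := (hspan ▸ Algebra.mem_top (x := x q)).2
  have hy := (hspan ▸ Algebra.mem_top (x := y q)).2
  simp only [homogeneousComponent_x, homogeneousComponent_y, if_true, hab, hcd] at hx hy
  exact det_ne_zero_of_mem_span hx hy

theorem eq_or_mul_eq_one_of_mul_eq_smul_mul {a b c d : ℂ} (hq : q ≠ 1)
    (hdet : a * d - b * c ≠ 0)
    (h : (a • x q' + b • y q') * (c • x q' + d • y q') =
      q • ((c • x q' + d • y q') * (a • x q' + b • y q'))) :
    q' = q ∨ q * q' = 1 := by
  rw [smul_x_add_smul_y_mul, smul_x_add_smul_y_mul] at h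
  have hcoef := Fintype.linearIndependent_iff.1 (linearIndependent_quadratic_monomials q')
    ![a * c - q * (c * a), a * d * q' + b * c - q * (c * b * q' + d * a), b * d - q * (d * b)]
    (by simp only [Fin.sum_univ_three, Matrix.cons_val]; linear_combination (norm := module) h)
  exact eq_or_mul_eq_one_of_commutation hq hdet (sub_eq_zero.1 (by simpa using hcoef 0))
    (sub_eq_zero.1 (by simpa using hcoef 1)) (sub_eq_zero.1 (by simpa using hcoef 2))

theorem eq_or_mul_eq_one_of_adjoin_eq_top (hq : q ≠ 1) {X Y : QuantumPlane q'}
    (hXY : X * Y = q • (Y * X)) (hadj : Algebra.adjoin ℂ {X, Y} = ⊤) :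
    q' = q ∨ q * q' = 1 := by
  have hfirst (w : QuantumPlane q') :=
    firstOrderSubalgebra_span_x_y_eq_top (q := q') ▸ Algebra.mem_top (x := w)
  obtain ⟨⟨α, hα⟩, hX⟩ := hfirst X
  obtain ⟨⟨β, hβ⟩, hY⟩ := hfirst Y
  obtain ⟨a, b, hab⟩ := Submodule.mem_span_pair.1 hX
  obtain ⟨c, d, hcd⟩ := Submodule.mem_span_pair.1 hY
  have hdet : a * d - b * c ≠ 0 :=
    det_ne_zero_of_adjoin_eq_top hadj hα.symm hβ.symm hab.symm hcd.symm
  have hlin := congrArg (homogeneousComponent q' 1) hXY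
  rw [map_smul, homogeneousComponent_one_mul hα.symm hβ.symm,
    homogeneousComponent_one_mul hβ.symm hα.symm, ← hab, ← hcd] at hlin
  obtain ⟨h₁, h₂⟩ := (linearIndependent_x_y q').eq_zero_of_pair
    (s := (1 - q) * (α * c + β * a)) (t := (1 - q) * (α * d + β * b))
    (by linear_combination (norm := module) hlin)
  rw [mul_eq_zero, or_iff_right (sub_ne_zero.2 hq.symm)] at h₁ h₂
  have hα₀ : α = 0 := (mul_eq_zero.1
    (by linear_combination a * h₂ - b * h₁ : α * (a * d - b * c) = 0)).resolve_right hdet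
  have hβ₀ : β = 0 := (mul_eq_zero.1
    (by linear_combination d * h₁ - c * h₂ : β * (a * d - b * c) = 0)).resolve_right hdet
  have hX₀ : homogeneousComponent q' 0 X = 0 := by rw [← hα, hα₀, map_zero]
  have hY₀ : homogeneousComponent q' 0 Y = 0 := by rw [← hβ, hβ₀, map_zero]
  have hquad := congrArg (homogeneousComponent q' 2) hXY
  rw [map_smul, homogeneousComponent_two_mul hX₀ hY₀, homogeneousComponent_two_mul hY₀ hX₀, ← hab,
    ← hcd] at hquad
  exact eq_or_mul_eq_one_of_mul_eq_smul_mul hq hdet hquad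

theorem eq_or_mul_eq_one_of_surjective (hq : q ≠ 1) (f : QuantumPlane q →ₐ[ℂ] QuantumPlane q')
    (hf : Function.Surjective f) : q' = q ∨ q * q' = 1 := by
  refine eq_or_mul_eq_one_of_adjoin_eq_top hq (X := f (x q)) (Y := f (y q)) ?_ ?_
  · rw [← map_mul, x_mul_y, map_smul, map_mul]
  · rw [← Set.image_pair, ← AlgHom.map_adjoin, adjoin_x_y, Algebra.map_top, AlgHom.range_eq_top]
    exact hf

theorem eq_or_mul_eq_one_of_algEquiv (φ : QuantumPlane q ≃ₐ[ℂ] QuantumPlane q') :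
    q' = q ∨ q * q' = 1 := by
  rcases eq_or_ne q 1 with rfl | hq
  · rcases eq_or_ne q' 1 with rfl | hq'
    · exact Or.inl rfl
    · simpa [eq_comm] using eq_or_mul_eq_one_of_surjective hq' φ.symm.toAlgHom φ.symm.surjective
  · exact eq_or_mul_eq_one_of_surjective hq φ.toAlgHom φ.surjective

end QuantumPlane

theorem quantumPlane_iso_iff_general (q q' : ℂ) (hq : q ≠ 0) :
    Nonempty (QuantumPlane q ≃ₐ[ℂ] QuantumPlane q') ↔ (q' = q ∨ q' = q⁻¹) := by
  constructor
  · rintro ⟨φ⟩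
    exact (QuantumPlane.eq_or_mul_eq_one_of_algEquiv φ).imp_right eq_inv_of_mul_eq_one_right
  · rintro (rfl | rfl)
    · exact ⟨AlgEquiv.refl⟩
    · exact ⟨QuantumPlane.swapEquiv (mul_inv_cancel₀ hq)⟩

/-- For nonzero `q q' : ℂ`, the quantum planes with parameters `q` and `q'`
are isomorphic as ℂ-algebras if and only if `q' = q` or `q' = q⁻¹`. -/
theorem quantumPlane_iso_iff (q q' : ℂ) (hq : q ≠ 0) (hq' : q' ≠ 0) :
    Nonempty (QuantumPlane q ≃ₐ[ℂ] QuantumPlane q') ↔ (q' = q ∨ q' = q⁻¹) :=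
  quantumPlane_iso_iff_general q q' hq
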